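/- arXiv:2411.04639 — 4 statements merged into one kernel-verified Lean document; each statement's English description precedes it below -/
import Mathlib

section
/- Let X and Y be finite-dimensional complex representations of a group G, and let α : X → Y be an injective G-equivariant linear map. Then for all x, y ∈ X, the orbit closures of x and y in X intersect if and only if the orbit closures of α(x) and α(y) in Y intersect. -/
/-- An injective `G`-equivariant linear map between finite-dimensional complex
representations preserves and reflects closure equivalence. -/
theorem closure_equivalence_iff_of_injective_equivariant
    {G X Y : Type*} [Group G]
    [NormedAddCommGroup X] [NormedSpace ℂ X] [FiniteDimensional ℂ X]
    [NormedAddCommGroup Y] [NormedSpace ℂ Y] [FiniteDimensional ℂ Y]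
    [MulAction G X] [MulAction G Y]
    (α : X →ₗ[ℂ] Y) (hinj : Function.Injective α)
    (hequiv : ∀ (g : G) (x : X), α (g • x) = g • α x)
    (x y : X) :
    (closure (MulAction.orbit G x) ∩ closure (MulAction.orbit G y)).Nonempty ↔
      (closure (MulAction.orbit G (α x)) ∩ closure (MulAction.orbit G (α y))).Nonempty := by
  have hce := α.isClosedEmbedding_of_injective (LinearMap.ker_eq_bot.mpr hinj)
  have horb : ∀ z : X, MulAction.orbit G (α z) = α '' MulAction.orbit G z := by
    intro z
    ext w
    constructor
    · rintro ⟨g, rfl⟩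
      exact ⟨g • z, ⟨g, rfl⟩, hequiv g z⟩
    · rintro ⟨_, ⟨g, rfl⟩, rfl⟩
      exact ⟨g, (hequiv g z).symm⟩
  have hcl : ∀ z : X, closure (MulAction.orbit G (α z)) = α '' closure (MulAction.orbit G z) := by
    intro z
    rw [horb, hce.closure_image_eq]
  constructor
  · rintro ⟨w, hw1, hw2⟩
    exact ⟨α w, (hcl x).symm ▸ Set.mem_image_of_mem _ hw1,
      (hcl y).symm ▸ Set.mem_image_of_mem _ hw2⟩
  · rintro ⟨w, hw1, hw2⟩
    rw [hcl] at hw1 hw2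
    obtain ⟨a, ha, rfl⟩ := hw1
    obtain ⟨b, hb, hab⟩ := hw2
    exact ⟨a, ha, hinj hab ▸ hb⟩
end

section
/- Two complex n×n matrices have intersecting orbit closures under the conjugation action of GLₙ(ℂ) if and only if they have the same characteristic polynomial. -/
/-!
The characteristic polynomial is a continuous conjugation invariant, so it is constant on orbit
closures. Conversely, over `ℂ` every matrix is conjugate to an upper triangular `T`, and
conjugating `T` by `diag(s⁻ⁱ)` multiplies the entry `(i, j)` by `s ^ (j - i)`; letting `s → 0`
shows that the diagonal part of `T`, whose entries are the roots of the characteristic polynomial,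
lies in the orbit closure. Two diagonal matrices with the same roots differ by a permutation of
the diagonal, hence are conjugate.
-/

open Matrix Module MulAction Polynomial Topology

namespace Module.Basis

variable {R M : Type*} [AddCommGroup M] {n : ℕ}

section Ring

variable [Ring R] [Module R M] {N : Submodule R M}

theorem repr_mkFinSnoc_coe (b : Basis (Fin n) R N) (y : M)
    (hli : ∀ (c : R), ∀ x ∈ N, c • y + x = 0 → c = 0) (hsp : ∀ z : M, ∃ c : R, z + c • y ∈ N)
    (x : N) : ⇑((b.mkFinSnoc y hli hsp).repr x) = Fin.snoc (α := fun _ ↦ R) (b.repr x) 0 := by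
  have hx : (x : M) = ∑ i, Fin.snoc (α := fun _ ↦ R) (b.repr x) 0 i • b.mkFinSnoc y hli hsp i := by
    simp only [Fin.sum_univ_castSucc, coe_mkFinSnoc, Fin.snoc_castSucc, Fin.snoc_last, zero_smul,
      add_zero, Function.comp_apply]
    conv_lhs => rw [← b.sum_repr x]
    simp only [Submodule.coe_sum, Submodule.coe_smul]
  rw [hx, repr_sum_self]

end Ring

variable [CommRing R] [Module R M] {N : Submodule R M}

theorem isUpperTriangular_toMatrix_mkFinSnoc {f : Module.End R M} (hN : ∀ x ∈ N, f x ∈ N)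
    {b : Basis (Fin n) R N} (hb : (LinearMap.toMatrix b b (f.restrict hN)).IsUpperTriangular)
    (y : M) (hli : ∀ (c : R), ∀ x ∈ N, c • y + x = 0 → c = 0)
    (hsp : ∀ z : M, ∃ c : R, z + c • y ∈ N) :
    (LinearMap.toMatrix (b.mkFinSnoc y hli hsp) (b.mkFinSnoc y hli hsp) f).IsUpperTriangular := by
  intro i j (hji : j < i)
  obtain ⟨j, rfl⟩ := Fin.exists_castSucc_eq.mpr (Fin.ne_last_of_lt hji)
  have hf : f (b.mkFinSnoc y hli hsp j.castSucc) = f.restrict hN (b j) := by simp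
  rw [LinearMap.toMatrix_apply, hf, repr_mkFinSnoc_coe]
  induction i using Fin.lastCases with
  | last => simp
  | cast i => simpa [LinearMap.toMatrix_apply] using hb (Fin.castSucc_lt_castSucc_iff.mp hji)

end Module.Basis

namespace Module.End

variable {K V : Type*} [Field K] [AddCommGroup V] [Module K V] [IsAlgClosed K]
  [FiniteDimensional K V]

theorem exists_dual_ne_zero_mapsTo_ker [Nontrivial V] (f : End K V) :
    ∃ φ : Dual K V, φ ≠ 0 ∧ ∀ x ∈ LinearMap.ker φ, f x ∈ LinearMap.ker φ := by
  obtain ⟨μ, hμ⟩ := exists_eigenvalue f.dualMap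
  obtain ⟨φ, hφ⟩ := hμ.exists_hasEigenvector
  refine ⟨φ, hφ.2, fun x hx ↦ ?_⟩
  simpa [LinearMap.mem_ker.mp hx] using LinearMap.congr_fun hφ.apply_eq_smul x

theorem exists_basis_isUpperTriangular_toMatrix {n : ℕ} (hn : finrank K V = n) (f : End K V) :
    ∃ b : Basis (Fin n) K V, (LinearMap.toMatrix b b f).IsUpperTriangular := by
  induction n generalizing V with
  | zero => exact ⟨finBasisOfFinrankEq K V hn, fun i ↦ i.elim0⟩
  | succ n ih =>
    have : Nontrivial V := nontrivial_of_finrank_eq_succ hn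
    obtain ⟨φ, hφ, hker⟩ := f.exists_dual_ne_zero_mapsTo_ker
    obtain ⟨b, hb⟩ :=
      ih (by have := Dual.finrank_ker_add_one_of_ne_zero hφ; omega) (f.restrict hker)
    obtain ⟨y, hy⟩ : ∃ y, φ y ≠ 0 := by
      by_contra! h
      exact hφ (LinearMap.ext h)
    refine ⟨b.mkFinSnoc y (fun c x hx hcx ↦ ?_) (fun z ↦ ⟨-(φ z / φ y), ?_⟩),
      Basis.isUpperTriangular_toMatrix_mkFinSnoc hker hb _ _ _⟩
    · have h := congrArg φ hcx
      rw [map_add, map_smul, hx, add_zero, smul_eq_mul, map_zero] at h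
      exact (mul_eq_zero.mp h).resolve_right hy
    · simp [field]

end Module.End

namespace Matrix

section orbit

variable {n R : Type*} [Fintype n] [DecidableEq n]

theorem setOf_conj_eq_orbit [Semiring R] (A : Matrix n n R) :
    {C | ∃ g : GL n R, C = (g : Matrix n n R) * A * ((g⁻¹ : GL n R) : Matrix n n R)} =
      orbit (ConjAct (GL n R)) A := by
  ext C
  constructor
  · rintro ⟨g, rfl⟩
    exact ⟨ConjAct.toConjAct g, rfl⟩
  · rintro ⟨g, rfl⟩
    exact ⟨ConjAct.ofConjAct g, rfl⟩

theorem charpoly_conjAct_smul [CommRing R] (g : ConjAct (GL n R)) (A : Matrix n n R) :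
    (g • A).charpoly = A.charpoly := by
  simp [ConjAct.units_smul_def, coe_units_inv]

theorem diagonal_comp_mem_orbit [Semiring R] (d : n → R) (σ : Equiv.Perm n) :
    diagonal (d ∘ σ) ∈ orbit (ConjAct (GL n R)) (diagonal d) := by
  refine ⟨ConjAct.toConjAct ((permMatrixHom (n := n) (R := R)).toHomUnits σ⁻¹), ?_⟩
  ext i j
  simp [ConjAct.units_smul_def, ← map_inv, -coe_units_inv, Equiv.Perm.permMatrix,
    PEquiv.toMatrix_toPEquiv_mul, PEquiv.mul_toMatrix_toPEquiv, diagonal_apply, Equiv.Perm.inv_def]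

theorem isClosed_setOf_charpoly_eq [CommRing R] [IsDomain R] [Infinite R] [TopologicalSpace R]
    [IsTopologicalRing R] [T2Space R] (p : R[X]) :
    IsClosed {M : Matrix n n R | M.charpoly = p} := by
  have : {M : Matrix n n R | M.charpoly = p} = ⋂ t, {M | (scalar n t - M).det = p.eval t} := by
    ext M
    simp only [Set.mem_ofPred_eq, Set.mem_iInter, ← eval_charpoly]
    exact ⟨fun h t ↦ h ▸ rfl, Polynomial.funext⟩
  rw [this]
  exact isClosed_iInter fun t ↦
    isClosed_eq (continuous_const.sub continuous_id).matrix_det continuous_const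

theorem charpoly_eq_of_mem_closure_orbit [CommRing R] [IsDomain R] [Infinite R] [TopologicalSpace R]
    [IsTopologicalRing R] [T2Space R] {A M : Matrix n n R}
    (hM : M ∈ closure (orbit (ConjAct (GL n R)) A)) : M.charpoly = A.charpoly :=
  closure_minimal (by rintro _ ⟨g, rfl⟩; exact charpoly_conjAct_smul g A)
    (isClosed_setOf_charpoly_eq _) hM

theorem continuous_conjAct_smul [Semiring R] [TopologicalSpace R] [IsTopologicalSemiring R]
    (g : ConjAct (GL n R)) : Continuous fun M : Matrix n n R ↦ g • M := by
  simp only [ConjAct.units_smul_def]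
  fun_prop

theorem orbit_subset_closure_orbit [Semiring R] [TopologicalSpace R] [IsTopologicalSemiring R]
    {A M : Matrix n n R} (hM : M ∈ closure (orbit (ConjAct (GL n R)) A)) :
    orbit (ConjAct (GL n R)) M ⊆ closure (orbit (ConjAct (GL n R)) A) := by
  rintro _ ⟨g, rfl⟩
  refine map_mem_closure (continuous_conjAct_smul g) hM ?_
  rintro _ ⟨h, rfl⟩
  exact ⟨g * h, mul_smul g h A⟩

end orbit

section triangular

variable {K : Type*} [Field K] {n : ℕ}

theorem roots_charpoly_of_isUpperTriangular {ι : Type*} [Fintype ι] [DecidableEq ι]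
    [LinearOrder ι] {T : Matrix ι ι K} (hT : T.IsUpperTriangular) :
    T.charpoly.roots = Finset.univ.val.map T.diag := by
  rw [charpoly_of_isUpperTriangular _ hT,
    roots_prod _ _ (Finset.prod_ne_zero_iff.mpr fun i _ ↦ X_sub_C_ne_zero _)]
  simp_rw [roots_X_sub_C]
  exact Multiset.bind_singleton _ _

theorem exists_isUpperTriangular_mem_orbit [IsAlgClosed K] (A : Matrix (Fin n) (Fin n) K) :
    ∃ T ∈ orbit (ConjAct (GL (Fin n) K)) A, T.IsUpperTriangular := by
  let e := Pi.basisFun K (Fin n)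
  obtain ⟨b, hb⟩ := End.exists_basis_isUpperTriangular_toMatrix (n := n) (by simp) (toLin e e A)
  let g : GL (Fin n) K := ⟨b.toMatrix e, e.toMatrix b,
    Basis.toMatrix_mul_toMatrix_flip _ _, Basis.toMatrix_mul_toMatrix_flip _ _⟩
  refine ⟨_, ⟨ConjAct.toConjAct g, rfl⟩, ?_⟩
  show (b.toMatrix e * A * e.toMatrix b).IsUpperTriangular
  rwa [← LinearMap.toMatrix_toLin e e A, basis_toMatrix_mul_linearMap_toMatrix_mul_basis_toMatrix]

theorem diagonal_diag_mem_closure_orbit [TopologicalSpace K] [IsTopologicalRing K]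
    [(𝓝[≠] (0 : K)).NeBot] {T : Matrix (Fin n) (Fin n) K} (hT : T.IsUpperTriangular) :
    diagonal T.diag ∈ closure (orbit (ConjAct (GL (Fin n) K)) T) := by
  let path (s : K) : Matrix (Fin n) (Fin n) K := of fun i j ↦ s ^ ((j : ℕ) - i) * T i j
  have hpath : Continuous path := by fun_prop
  have hpath0 : path 0 = diagonal T.diag := by
    ext i j
    rcases lt_trichotomy i j with hij | rfl | hij
    · simp [path, hij.ne, zero_pow (Nat.sub_ne_zero_of_lt hij)]
    · simp [path]
    · simp [path, hij.ne', hT hij]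
  have hmaps : Set.MapsTo path {0}ᶜ (orbit (ConjAct (GL (Fin n) K)) T) := by
    intro s (hs : s ≠ 0)
    let g : GL (Fin n) K := Units.map (diagonalRingHom (Fin n) K).toMonoidHom
      (MulEquiv.piUnits.symm fun i ↦ (Units.mk0 s hs)⁻¹ ^ (i : ℕ))
    have hg : (g : Matrix (Fin n) (Fin n) K) = diagonal fun i : Fin n ↦ s⁻¹ ^ (i : ℕ) := by simp [g]
    have hg' : ((g⁻¹ : GL (Fin n) K) : Matrix (Fin n) (Fin n) K) =
        diagonal fun i : Fin n ↦ s ^ (i : ℕ) := by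
      simp [g]
    refine ⟨ConjAct.toConjAct g, ?_⟩
    show ConjAct.toConjAct g • T = path s
    ext i j
    rw [ConjAct.units_smul_def, ConjAct.ofConjAct_toConjAct, hg, hg', mul_diagonal, diagonal_mul]
    show s⁻¹ ^ (i : ℕ) * T i j * s ^ (j : ℕ) = s ^ ((j : ℕ) - i) * T i j
    rcases le_or_gt i j with hij | hij
    · rw [pow_sub₀ s hs hij, inv_pow]
      ring
    · simp [hT hij]
  rw [← hpath0]
  exact map_mem_closure hpath (by simp) hmaps

theorem exists_diagonal_mem_closure_orbit [IsAlgClosed K] [TopologicalSpace K]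
    [IsTopologicalRing K] [(𝓝[≠] (0 : K)).NeBot] (A : Matrix (Fin n) (Fin n) K) :
    ∃ d : Fin n → K, Finset.univ.val.map d = A.charpoly.roots ∧
      diagonal d ∈ closure (orbit (ConjAct (GL (Fin n) K)) A) := by
  obtain ⟨_, ⟨g, rfl⟩, hT⟩ := exists_isUpperTriangular_mem_orbit A
  refine ⟨(g • A).diag, ?_, orbit_smul g A ▸ diagonal_diag_mem_closure_orbit hT⟩
  rw [← charpoly_conjAct_smul g A, roots_charpoly_of_isUpperTriangular hT]

end triangular

end Matrix

theorem Equiv.Perm.exists_comp_eq_of_map_univ_eq {ι α : Type*} [Fintype ι] [DecidableEq α]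
    {f g : ι → α} (h : Finset.univ.val.map f = Finset.univ.val.map g) :
    ∃ σ : Equiv.Perm ι, f ∘ σ = g := by
  have hcard (c : α) : Fintype.card {i // g i = c} = Fintype.card {i // f i = c} := by
    have := congrArg (Multiset.count c) h
    simp only [Multiset.count_map] at this
    simp [Fintype.card_subtype, Finset.card, eq_comm, this]
  exact ⟨Equiv.ofFiberEquiv fun c ↦ Fintype.equivOfCardEq (hcard c),
    funext (Equiv.ofFiberEquiv_map _)⟩

/-- Two complex `n×n` matrices have intersecting orbit closures under the conjugation action
of `GLₙ(ℂ)` if and only if they have the same characteristic polynomial. -/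
theorem conjugation_orbit_closures_intersect_iff_charpoly_eq
    (n : ℕ) (A B : Matrix (Fin n) (Fin n) ℂ) :
    (closure {C : Matrix (Fin n) (Fin n) ℂ |
        ∃ g : GL (Fin n) ℂ, C = (g : Matrix (Fin n) (Fin n) ℂ) * A * ((g⁻¹ : GL (Fin n) ℂ) : Matrix (Fin n) (Fin n) ℂ)} ∩
      closure {C : Matrix (Fin n) (Fin n) ℂ |
        ∃ g : GL (Fin n) ℂ, C = (g : Matrix (Fin n) (Fin n) ℂ) * B * ((g⁻¹ : GL (Fin n) ℂ) : Matrix (Fin n) (Fin n) ℂ)}).Nonempty ↔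
    A.charpoly = B.charpoly := by
  rw [setOf_conj_eq_orbit, setOf_conj_eq_orbit]
  constructor
  · rintro ⟨M, hMA, hMB⟩
    exact (charpoly_eq_of_mem_closure_orbit hMA).symm.trans (charpoly_eq_of_mem_closure_orbit hMB)
  · intro h
    obtain ⟨a, ha, hA⟩ := exists_diagonal_mem_closure_orbit A
    obtain ⟨b, hb, hB⟩ := exists_diagonal_mem_closure_orbit B
    obtain ⟨σ, rfl⟩ := Equiv.Perm.exists_comp_eq_of_map_univ_eq (ha.trans (h ▸ hb.symm))
    exact ⟨_, orbit_subset_closure_orbit hA (diagonal_comp_mem_orbit a σ), hB⟩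
end

section
/- The diagonalizable part of any complex square matrix lies in the closure of its conjugation orbit: for every A ∈ ℂ^{n×n} with Jordan decomposition A = S + N (S diagonalizable, N nilpotent, SN = NS), the matrix S lies in the closure of {g A g⁻¹ : g ∈ GLₙ(ℂ)}. -/
/-!
Since `S` is semisimple and commutes with `N`, the subspace `ker N` has an `S`-invariant
complement, i.e. there is an idempotent `E` commuting with `S` with `range E = ker N`.
Conjugating `S + N` by `t • E + (1 - E)` rescales the corner `E (S + N) (1 - E)` by `t` and
fixes the rest, so letting `t → 0` puts `S + (1 - E) N` in the orbit closure of `A`.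
Now `(1 - E) N` commutes with `S` and has smaller nilpotency index, since `E` fixes the image of
the last nonzero power of `N`; as orbit closures are transitive, induction reaches `S`.
-/

open Polynomial Filter Topology Matrix

section ConjOrbit

variable {R : Type*} [Monoid R]

def conjOrbit (B : R) : Set R := {C | ∃ u : Rˣ, C = (u : R) * B * ↑u⁻¹}

lemma mem_conjOrbit_self (B : R) : B ∈ conjOrbit B := ⟨1, by simp⟩

variable [TopologicalSpace R] [ContinuousMul R]

lemma closure_conjOrbit_subset {A B : R} (h : B ∈ closure (conjOrbit A)) :
    closure (conjOrbit B) ⊆ closure (conjOrbit A) := by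
  refine closure_minimal ?_ isClosed_closure
  rintro _ ⟨u, rfl⟩
  refine map_mem_closure (f := fun X ↦ (u : R) * X * ↑u⁻¹) (by fun_prop) h ?_
  rintro _ ⟨v, rfl⟩
  exact ⟨u * v, by simp [mul_assoc]⟩

end ConjOrbit

namespace IsIdempotentElem

variable {R : Type*} [Ring R] {E : R}

section Field

variable {𝕜 : Type*} [Field 𝕜] [Algebra 𝕜 R]

lemma smul_add_one_sub_mul (hE : IsIdempotentElem E) (s t : 𝕜) :
    (s • E + (1 - E)) * (t • E + (1 - E)) = (s * t) • E + (1 - E) := by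
  simp only [add_mul, mul_add, smul_mul_assoc, mul_smul_comm, hE.eq, hE.mul_one_sub_self,
    hE.one_sub_mul_self, hE.one_sub.eq, smul_zero, add_zero, zero_add, smul_smul, mul_comm t]

def smulAddOneSubUnit (hE : IsIdempotentElem E) (t : 𝕜ˣ) : Rˣ where
  val := (t : 𝕜) • E + (1 - E)
  inv := (↑t⁻¹ : 𝕜) • E + (1 - E)
  val_inv := by rw [hE.smul_add_one_sub_mul, Units.mul_inv, one_smul, add_sub_cancel]
  inv_val := by rw [hE.smul_add_one_sub_mul, Units.inv_mul, one_smul, add_sub_cancel]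

end Field

variable [TopologicalSpace R] [IsTopologicalRing R]

theorem mul_mul_add_mem_closure_conjOrbit (𝕜 : Type*) [NontriviallyNormedField 𝕜] [Algebra 𝕜 R]
    [ContinuousSMul 𝕜 R] {B : R} (hE : IsIdempotentElem E) (hBE : (1 - E) * B * E = 0) :
    E * B * E + (1 - E) * B * (1 - E) ∈ closure (conjOrbit B) := by
  set F : 𝕜 → R := fun t ↦ E * B * E + (1 - E) * B * (1 - E) + t • (E * B * (1 - E))
  have hF : Tendsto F (𝓝[≠] 0) (𝓝 (E * B * E + (1 - E) * B * (1 - E))) :=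
    ((by fun_prop : Continuous F).tendsto' 0 _ (by simp [F])).mono_left nhdsWithin_le_nhds
  have hconj (t : 𝕜) : F t * (t • E + (1 - E)) = (t • E + (1 - E)) * B := by
    have hB : (1 - E) * B * (1 - E) = (1 - E) * B := by rw [mul_one_sub, hBE, sub_zero]
    simp only [F, add_mul, mul_add, smul_mul_assoc, mul_smul_comm, mul_assoc, hE.eq,
      hE.mul_one_sub_self, hE.one_sub_mul_self, hE.one_sub.eq, smul_zero, add_zero, zero_add,
      mul_zero]
    simp only [← mul_assoc, hB]
    rw [mul_one_sub, smul_sub]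
    abel
  refine mem_closure_of_tendsto hF ?_
  filter_upwards [self_mem_nhdsWithin] with t (ht : t ≠ 0)
  refine ⟨hE.smulAddOneSubUnit (Units.mk0 t ht), ?_⟩
  rw [Units.eq_mul_inv_iff_mul_eq]
  exact hconj t

end IsIdempotentElem

theorem Module.End.IsSemisimple.exists_isIdempotentElem_commute_range_eq {R M : Type*}
    [CommRing R] [AddCommGroup M] [Module R M] {f : Module.End R M} (hf : f.IsSemisimple)
    {p : Submodule R M} (hp : p ∈ f.invtSubmodule) :
    ∃ e : Module.End R M, IsIdempotentElem e ∧ Commute e f ∧ LinearMap.range e = p := by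
  obtain ⟨q, hq, hpq⟩ := Module.End.isSemisimple_iff.mp hf p hp
  have he := Submodule.isIdempotentElem_projection hpq
  refine ⟨p.projection q hpq, he, ?_, Submodule.range_projection hpq⟩
  rw [LinearMap.IsIdempotentElem.commute_iff he, Submodule.range_projection,
    Submodule.ker_projection]
  exact ⟨hp, hq⟩

namespace Matrix

variable {ι : Type*} [Fintype ι] [DecidableEq ι]

section Field

variable {K : Type*} [Field K]

theorem isSemisimple_toLin'_diagonal (d : ι → K) :
    Module.End.IsSemisimple (toLin' (diagonal d)) := by
  classical
  refine Module.End.isSemisimple_of_squarefree_aeval_eq_zero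
    (p := ∏ μ ∈ Finset.univ.image d, (X - C μ))
    (separable_prod_X_sub_C_iff'.mpr fun _ _ _ _ h ↦ h).squarefree ?_
  change aeval (toLinAlgEquiv' (diagonalAlgHom K d)) _ = 0
  have hd : aeval d (∏ μ ∈ Finset.univ.image d, (X - C μ)) = 0 := funext fun i ↦ by
    rw [aeval_pi_apply₂, map_prod]
    exact Finset.prod_eq_zero (Finset.mem_image_of_mem d (Finset.mem_univ i)) (by simp)
  rw [aeval_algHom_apply, aeval_algHom_apply, hd, map_zero, map_zero]

theorem isSemisimple_toLin'_conj_iff (g : GL ι K) (S : Matrix ι ι K) :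
    Module.End.IsSemisimple (toLin' ((g : Matrix ι ι K) * S * ((g⁻¹ : GL ι K) : Matrix ι ι K))) ↔
      Module.End.IsSemisimple (toLin' S) := by
  refine (LinearEquiv.isSemisimple_iff _ _ (toLin'OfInv g.inv_mul g.mul_inv) ?_).symm
  change toLin' (g : Matrix ι ι K) ∘ₗ toLin' S =
    toLin' ((g : Matrix ι ι K) * S * ((g⁻¹ : GL ι K) : Matrix ι ι K)) ∘ₗ toLin' (g : Matrix ι ι K)
  rw [← toLin'_mul, ← toLin'_mul, mul_assoc _ _ (g : Matrix ι ι K), Units.inv_mul, mul_one]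

theorem exists_isIdempotentElem_commute_range_eq_ker {D M : Matrix ι ι K}
    (hD : Module.End.IsSemisimple (toLin' D)) (hDM : Commute D M) :
    ∃ E : Matrix ι ι K, IsIdempotentElem E ∧ Commute D E ∧ M * E = 0 ∧
      ∀ X, M * X = 0 → E * X = X := by
  let Φ := toLinAlgEquiv' (R := K) (n := ι)
  have hker : LinearMap.ker (Φ M) ∈ Module.End.invtSubmodule (Φ D) := fun x (hx : Φ M x = 0) ↦ by
    change Φ M (Φ D x) = 0
    rw [← Module.End.mul_apply, ← map_mul, ← hDM.eq, map_mul, Module.End.mul_apply, hx, map_zero]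
  obtain ⟨e, he, hDe, hrange⟩ := hD.exists_isIdempotentElem_commute_range_eq hker
  refine ⟨Φ.symm e, he.map Φ.symm, Φ.symm_apply_apply D ▸ (hDe.map Φ.symm).symm, ?_,
    fun X hX ↦ ?_⟩
  · apply Φ.injective
    rw [map_mul, map_zero, AlgEquiv.apply_symm_apply, Module.End.mul_eq_comp,
      ← LinearMap.range_le_ker_iff, hrange]
  · apply Φ.injective
    rw [map_mul, AlgEquiv.apply_symm_apply, Module.End.mul_eq_comp,
      LinearMap.IsIdempotentElem.comp_eq_right_iff he, hrange, LinearMap.range_le_ker_iff,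
      ← Module.End.mul_eq_comp, ← map_mul, hX, map_zero]

end Field

theorem mem_closure_conjOrbit_add_of_isNilpotent {𝕜 : Type*} [NontriviallyNormedField 𝕜]
    {D M : Matrix ι ι 𝕜} (hD : Module.End.IsSemisimple (toLin' D)) (hDM : Commute D M)
    (hM : IsNilpotent M) : D ∈ closure (conjOrbit (D + M)) := by
  obtain ⟨k, hk⟩ := hM
  replace hk : M ^ (k + 1) = 0 := by rw [pow_succ, hk, zero_mul]
  induction k generalizing M with
  | zero =>
    rw [pow_one] at hk
    rw [hk, add_zero]
    exact subset_closure (mem_conjOrbit_self D)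
  | succ k ih =>
    obtain ⟨E, hE, hDE, hME, hfix⟩ := exists_isIdempotentElem_commute_range_eq_ker hD hDM
    have hDME : (D + M) * E = E * D := by rw [add_mul, hME, add_zero, hDE.eq]
    have hstep : D + (1 - E) * M ∈ closure (conjOrbit (D + M)) := by
      convert hE.mul_mul_add_mem_closure_conjOrbit 𝕜 (B := D + M)
        (by rw [mul_assoc, hDME, ← mul_assoc, hE.one_sub_mul_self, zero_mul]) using 1
      rw [mul_assoc E, hDME, ← mul_assoc, hE.eq, mul_one_sub ((1 - E) * (D + M)), mul_assoc,
        hDME, ← mul_assoc, hE.one_sub_mul_self, zero_mul, sub_zero]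
      noncomm_ring
    have hpow : ((1 - E) * M) ^ (k + 1) = 0 := by
      rw [pow_succ, ← mul_assoc, mul_pow_mul, mul_one_sub, hME, sub_zero, mul_assoc, ← pow_succ,
        one_sub_mul, hfix _ (by rw [← pow_succ', hk]), sub_self]
    exact closure_conjOrbit_subset hstep
      (ih (((Commute.one_right D).sub_right hDE).mul_right hDM) hpow)

end Matrix

/-- The diagonalizable part of the Jordan–Chevalley decomposition of a complex matrix lies
in the closure of its conjugation orbit. -/
theorem semisimple_part_mem_closure_conjugation_orbit
    (n : ℕ) (A S N : Matrix (Fin n) (Fin n) ℂ)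
    (hsum : A = S + N)
    (hdiag : ∃ g : GL (Fin n) ℂ, ∃ d : Fin n → ℂ,
      (g : Matrix (Fin n) (Fin n) ℂ) * S * ((g⁻¹ : GL (Fin n) ℂ) : Matrix (Fin n) (Fin n) ℂ)
        = Matrix.diagonal d)
    (hnil : IsNilpotent N) (hcomm : Commute S N) :
    S ∈ closure {C : Matrix (Fin n) (Fin n) ℂ |
      ∃ g : GL (Fin n) ℂ,
        C = (g : Matrix (Fin n) (Fin n) ℂ) * A * ((g⁻¹ : GL (Fin n) ℂ) : Matrix (Fin n) (Fin n) ℂ)} := by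
  obtain ⟨g, d, hgd⟩ := hdiag
  have hS : Module.End.IsSemisimple (toLin' S) :=
    (isSemisimple_toLin'_conj_iff g S).mp (hgd ▸ isSemisimple_toLin'_diagonal d)
  rw [hsum]
  exact mem_closure_conjOrbit_add_of_isNilpotent hS hcomm hnil
end

section
/- Every rational polyhedral cone C = {x ∈ ℝⁿ : Ax ≥ 0}, where A is a matrix with rational entries, admits an integral Hilbert basis: there exist finitely many vectors a₁,...,a_q ∈ C ∩ ℤⁿ such that every v ∈ C ∩ ℤⁿ is a nonnegative integer combination v = Σ_k m_k a_k with m_k ∈ ℕ. -/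
/-!
After clearing denominators, the lattice points of the cone are the integer vectors `v` with
`0 ≤ B v` for an integer matrix `B`. Writing `v = p - q` with `p, q ∈ ℕⁿ` and recording `r = B v`,
they are the image under `(p, q, r) ↦ p - q` of the submonoid `{(p, q, r) : B (p - q) = r}` of
`ℕⁿ × ℕⁿ × ℕᵐ`. That submonoid is finitely generated by Dickson's lemma, hence so is its image.
-/

open Matrix

theorem Rat.exists_pos_nat_mul_eq_intCast {ι : Type*} [Fintype ι] (f : ι → ℚ) :
    ∃ d : ℕ, 0 < d ∧ ∀ i, ∃ z : ℤ, f i * d = z := by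
  refine ⟨∏ i, (f i).den, Finset.prod_pos fun i _ => (f i).den_pos, fun i => ?_⟩
  obtain ⟨e, he⟩ := Finset.dvd_prod_of_mem (fun i => (f i).den) (Finset.mem_univ i)
  refine ⟨(f i).num * e, ?_⟩
  rw [he]
  push_cast
  rw [← mul_assoc, Rat.mul_den_eq_num]

theorem Matrix.natCast_mul_sum_ratCast_eq_mulVec {ι κ : Type*} [Fintype ι] {A : Matrix κ ι ℚ}
    {B : Matrix κ ι ℤ} {d : ℕ} (hB : ∀ i j, A i j * d = B i j) (v : ι → ℤ) (i : κ) :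
    (d : ℝ) * ∑ j, (A i j : ℝ) * v j = (B *ᵥ v) i := by
  simp only [mulVec, dotProduct, Int.cast_sum, Int.cast_mul, Finset.mul_sum]
  refine Finset.sum_congr rfl fun j _ => ?_
  rw [← Rat.cast_intCast (B i j), ← hB]
  push_cast
  ring

namespace AddSubmonoid

theorem FG.exists_closure_range_fin_eq {M : Type*} [AddMonoid M] {P : AddSubmonoid M}
    (hP : P.FG) : ∃ (q : ℕ) (a : Fin q → M), closure (Set.range a) = P := by
  obtain ⟨S, rfl⟩ := hP
  refine ⟨S.card, (↑) ∘ S.equivFin.symm, ?_⟩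
  rw [Set.range_comp, S.equivFin.symm.range_eq_univ, Set.image_univ, Subtype.range_coe]

theorem fg_comap_nonneg {ι κ : Type*} [Finite ι] [Finite κ] (f : (ι → ℤ) →+ (κ → ℤ)) :
    ((nonneg (κ → ℤ)).comap f).FG := by
  let castι : (ι → ℕ) →+ (ι → ℤ) := (Nat.castAddMonoidHom ℤ).compLeft ι
  let castκ : (κ → ℕ) →+ (κ → ℤ) := (Nat.castAddMonoidHom ℤ).compLeft κ
  let L : (ι → ℕ) × (ι → ℕ) × (κ → ℕ) →+ (ι → ℤ) :=
    castι.comp (AddMonoidHom.fst _ _) -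
      castι.comp ((AddMonoidHom.fst _ _).comp (AddMonoidHom.snd _ _))
  let R : (ι → ℕ) × (ι → ℕ) × (κ → ℕ) →+ (κ → ℤ) :=
    castκ.comp ((AddMonoidHom.snd _ _).comp (AddMonoidHom.snd _ _))
  suffices ((f.comp L).eqLocusM R).map L = (nonneg (κ → ℤ)).comap f from
    this ▸ (fg_eqLocusM _ _).map L
  ext v
  simp only [mem_map, mem_comap, mem_nonneg, AddMonoidHom.mem_eqLocusM]
  constructor
  · rintro ⟨x, hx, rfl⟩
    rw [← AddMonoidHom.comp_apply, hx]
    exact fun k => Int.natCast_nonneg _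
  · intro hv
    let x : (ι → ℕ) × (ι → ℕ) × (κ → ℕ) :=
      (fun j => (v j).toNat, fun j => (-v j).toNat, fun k => (f v k).toNat)
    have hLx : L x = v := by
      ext j
      simp [x, L, castι]
    refine ⟨x, ?_, hLx⟩
    rw [AddMonoidHom.comp_apply, hLx]
    ext k
    simpa [x, R, castκ] using hv k

end AddSubmonoid

/-- Gordan's lemma / integral Hilbert bases: the lattice points of a rational polyhedral cone
`{x : Ax ≥ 0}` are generated, as nonnegative integer combinations, by finitely many of them. -/
theorem rational_polyhedral_cone_has_integral_Hilbert_basis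
    (m n : ℕ) (A : Matrix (Fin m) (Fin n) ℚ) :
    ∃ (q : ℕ) (a : Fin q → (Fin n → ℤ)),
      (∀ k : Fin q, ∀ i : Fin m, 0 ≤ ∑ j, (A i j : ℝ) * (a k j : ℝ)) ∧
      ∀ v : Fin n → ℤ, (∀ i : Fin m, 0 ≤ ∑ j, (A i j : ℝ) * (v j : ℝ)) →
        ∃ c : Fin q → ℕ, v = ∑ k, c k • a k := by
  obtain ⟨d, hd, hz⟩ := Rat.exists_pos_nat_mul_eq_intCast (Function.uncurry A)
  choose z hz using hz
  let B : Matrix (Fin m) (Fin n) ℤ := of fun i j => z (i, j)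
  let C : AddSubmonoid (Fin n → ℤ) := (AddSubmonoid.nonneg _).comap B.mulVecLin.toAddMonoidHom
  have hC : ∀ v : Fin n → ℤ, (∀ i, 0 ≤ ∑ j, (A i j : ℝ) * v j) ↔ v ∈ C := by
    refine fun v => (forall_congr' fun i => ?_).trans Pi.le_def.symm
    rw [← mul_nonneg_iff_of_pos_left (Nat.cast_pos.mpr hd),
      natCast_mul_sum_ratCast_eq_mulVec (A := A) (B := B) (fun i j => hz (i, j))]
    exact Int.cast_nonneg_iff
  obtain ⟨q, a, ha⟩ :
      ∃ (q : ℕ) (a : Fin q → Fin n → ℤ), AddSubmonoid.closure (Set.range a) = C :=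
    (AddSubmonoid.fg_comap_nonneg _).exists_closure_range_fin_eq
  refine ⟨q, a, fun k => (hC (a k)).2 ?_, fun v hv => ?_⟩
  · exact ha ▸ AddSubmonoid.subset_closure (Set.mem_range_self k)
  · rw [← AddSubmonoid.mem_closure_range_iff_of_fintype, ha]
    exact (hC v).1 hv
end
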